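/- arXiv:2306.00141 — 4 statements merged into one kernel-verified Lean document; each statement's English description precedes it below -/
import Mathlib

section
/- Let f ≥ 1 and consider the Z-module X = Z^{f·n} with basis E_{j,i} for 0 ≤ j ≤ f-1, 1 ≤ i ≤ n. Define χ_{j,k,l} = E_{j,k} − E_{j-1,l} (indices j taken mod f). Suppose m_{j,i} ∈ Z and n_{j,k,l,m} ∈ Z_{≥0} (for k < l, finitely many nonzero) satisfy Σ m_{j,i} χ_{j,i,i} + Σ n_{j,k,l,m} χ_{j,k,l} = 0 in X. Then all n_{j,k,l,m} = 0 and m_{0,i} = m_{1,i} = ... = m_{f-1,i} for every i. -/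
/-!
Pair the relation with the cocharacter `η`, which is constant on each diagonal weight
`χ_{j,i,i}` and takes the value `l - k > 0` on `χ_{j,k,l}` for `k < l`. The pairing turns the
relation into a vanishing sum of nonnegative integers `n_{j,k,l,m} (l - k)`, so every
`n_{j,k,l,m}` vanishes. What remains is `Σ m_{j,i} χ_{j,i,i} = 0`, whose `E_{j,i}`-coordinate is
`m_{j,i} - m_{j+1,i}`; hence `m_{j,i}` is invariant under `j ↦ j + 1`, which generates `ℤ/f`.
-/

open Finset Matrix

section

variable {f n : ℕ}

def chi (j : ZMod f) (k l : Fin n) : ZMod f × Fin n → ℤ :=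
  Pi.single (j, k) 1 - Pi.single (j - 1, l) 1

/-- The paper's cocharacter `η = Σ_j Σ_i (n - i) E_{j,i}^∨`, with `i` counted from `0` here. -/
def eta (f n : ℕ) : ZMod f × Fin n → ℤ := fun x => n - 1 - x.2

theorem chi_dotProduct_eta [NeZero f] (j : ZMod f) (k l : Fin n) :
    chi j k l ⬝ᵥ eta f n = l - k := by
  simp only [chi, eta, sub_dotProduct, single_dotProduct, one_mul]
  ring

theorem sum_smul_chi_diag_apply [NeZero f] (m : ZMod f → Fin n → ℤ) (j : ZMod f) (i : Fin n) :
    (∑ j, ∑ i, m j i • chi j i i) (j, i) = m j i - m (j + 1) i := by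
  simp [chi, Finset.sum_apply, Pi.single_apply, mul_sub, ite_and, eq_sub_iff_add_eq,
    sum_ite_eq]

end

theorem ZMod.apply_eq_apply_of_add_one {f : ℕ} {α : Type*} {g : ZMod f → α}
    (h : ∀ j, g (j + 1) = g j) (j j' : ZMod f) : g j = g j' := by
  suffices ∀ z : ℤ, g z = g 0 by
    obtain ⟨a, rfl⟩ := ZMod.intCast_surjective j
    obtain ⟨b, rfl⟩ := ZMod.intCast_surjective j'
    rw [this, this]
  intro z
  induction z using Int.induction_on with
  | zero => simp
  | succ k ih => rw [Int.cast_add, Int.cast_one, h, ih]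
  | pred k ih => rw [← ih, ← h, Int.cast_sub, Int.cast_one, sub_add_cancel]

theorem Fintype.eq_zero_of_sum_mul_eq_zero_of_pos {σ : Type*} [Fintype σ] {c : σ → ℕ}
    {w : σ → ℤ} (hpos : ∀ s, c s ≠ 0 → 0 < w s) (h : ∑ s, (c s : ℤ) * w s = 0) (s : σ) :
    c s = 0 := by
  have hnonneg : ∀ s, 0 ≤ (c s : ℤ) * w s := fun s => by
    by_cases hs : c s = 0
    · simp [hs]
    · exact (mul_pos (by positivity) (hpos s hs)).le
  by_contra hs
  have := (Fintype.sum_eq_zero_iff_of_nonneg hnonneg).mp h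
  exact (mul_pos (by positivity) (hpos s hs)).ne' (congrFun this s)

/-- In `X = ℤ^{f·n}` with basis `E_{j,i}` (`j ∈ ℤ/f` cyclic, `i ∈ Fin n`), let
`χ_{j,k,l} = E_{j,k} − E_{j−1,l}`.  If integers `m_{j,i}` and nonnegative integers
`n_{j,k,l,m}` (supported on `k < l`, with `m` ranging over a finite range `M`)
satisfy `Σ m_{j,i} χ_{j,i,i} + Σ n_{j,k,l,m} χ_{j,k,l} = 0`, then all
`n_{j,k,l,m} = 0` and `m_{j,i}` is independent of `j` for each `i`. -/
theorem weight_zero_monomials (f n M : ℕ) [NeZero f]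
    (χ : ZMod f → Fin n → Fin n → ((ZMod f × Fin n) → ℤ))
    (hχ : ∀ j k l, χ j k l = fun x =>
      (if x = (j, k) then 1 else 0) - (if x = (j - 1, l) then 1 else 0))
    (m : ZMod f → Fin n → ℤ)
    (nn : ZMod f → Fin n → Fin n → Fin M → ℕ)
    (hsupp : ∀ j k l mm, ¬ k < l → nn j k l mm = 0)
    (heq : (∑ j : ZMod f, ∑ i : Fin n, m j i • χ j i i)
        + (∑ j : ZMod f, ∑ k : Fin n, ∑ l : Fin n, ∑ mm : Fin M,
            (nn j k l mm : ℤ) • χ j k l) = 0) :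
    (∀ j k l mm, nn j k l mm = 0) ∧ (∀ j j' : ZMod f, ∀ i, m j i = m j' i) := by
  obtain rfl : χ = chi := by
    funext j k l x
    simp [hχ, chi, Pi.single_apply]
  have hnn : ∀ j k l mm, nn j k l mm = 0 := by
    have hpair := congrArg (· ⬝ᵥ eta f n) heq
    simp only [add_dotProduct, sum_dotProduct, smul_dotProduct, chi_dotProduct_eta, sub_self,
      smul_eq_mul, mul_zero, sum_const_zero, zero_add, zero_dotProduct,
      ← Fintype.sum_prod_type'] at hpair
    intro j k l mm
    refine Fintype.eq_zero_of_sum_mul_eq_zero_of_pos (fun s hs => ?_) hpair (j, k, l, mm)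
    have hkl : s.2.1 < s.2.2.1 := not_imp_comm.mp (hsupp _ _ _ _) hs
    exact sub_pos.mpr (by exact_mod_cast hkl)
  have hdiag : ∑ j, ∑ i, m j i • chi j i i = 0 := by simpa [hnn] using heq
  refine ⟨hnn, fun j j' i => ZMod.apply_eq_apply_of_add_one (g := (m · i)) (fun j => ?_) j j'⟩
  have hcoord := congrFun hdiag (j, i)
  rw [sum_smul_chi_diag_apply] at hcoord
  exact (sub_eq_zero.mp hcoord).symm
end

section
/- Let R = F[x_1^{±1}, ..., x_n^{±1}] be a Laurent polynomial ring over a field F. Suppose λ ∈ R is a Laurent polynomial with the property that for every k ∈ {1, ..., n−1}, the image of λ under the F-algebra map r_k : R → F[d_1^{±1},...,d_{n}^{±1}, a][ (d_k d_{k+1})^{-1} ]-type evaluation given by x_i ↦ d_1⋯d_i for i < k, x_k ↦ d_1⋯d_{k-1}·a, and x_i ↦ −d_1⋯d_i for i > k, lies in the subring F[d_1^{±1},...,d_{k-1}^{±1}, a, (d_k d_{k+1})^{±1}, d_{k+2}^{±1},...,d_n^{±1}] (i.e. involves no negative powers of a). Then λ ∈ F[x_1, ..., x_{n-1}, x_n^{±1}].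 -/
/-!
`r_K` sends the monomial `x^e` to a single monomial `± d^{E_K e} a^{e_K}`, and
`E_K e + e_K • δ_K` is the vector of tail sums `j ↦ ∑_{i ≥ j} e_i`, which determines `e`.
So distinct monomials of `λ` stay distinct under `r_K`, and the hypothesis forces `e_K ≥ 0`
for every monomial `x^e` of `λ` and every `K < n - 1`. Such a monomial is a product of the
`x_i` and of powers of `x_n^{-1}`.
-/

open Finset

section TailSums

variable {ι M : Type*} [Fintype ι] [LinearOrder ι]

theorem sum_filter_le_eq_add_sum_filter_lt [AddCommMonoid M] (e : ι → M) (j : ι) :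
    ∑ i ∈ univ.filter (j ≤ ·), e i = e j + ∑ i ∈ univ.filter (j < ·), e i := by
  rw [← add_sum_erase _ _ (by simp : j ∈ univ.filter (j ≤ ·))]
  congr 2
  ext i
  simp [lt_iff_le_and_ne, and_comm, eq_comm]

theorem sum_filter_le_eq_sum_filter_le_ne_add [AddCommMonoid M] (e : ι → M) (j K : ι) :
    ∑ i ∈ univ.filter (j ≤ ·), e i
      = (∑ i ∈ univ.filter (fun i => j ≤ i ∧ i ≠ K), e i)
        + if j ≤ K then e K else 0 := by
  by_cases hjK : j ≤ K
  · rw [if_pos hjK, ← filter_filter, filter_ne', sum_erase_add _ _ (by simpa using hjK)]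
  · rw [if_neg hjK, add_zero]
    refine sum_congr (filter_congr fun i _ => ?_) fun _ _ => rfl
    exact ⟨fun hi => ⟨hi, by rintro rfl; exact hjK hi⟩, And.left⟩

variable [AddCancelCommMonoid M] {e e' : ι → M}

theorem eq_of_forall_sum_filter_le_eq
    (h : ∀ j, ∑ i ∈ univ.filter (j ≤ ·), e i = ∑ i ∈ univ.filter (j ≤ ·), e' i) :
    e = e' := by
  funext j
  induction j using WellFoundedGT.induction with
  | _ j ih =>
    have hj := h j
    rwa [sum_filter_le_eq_add_sum_filter_lt, sum_filter_le_eq_add_sum_filter_lt,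
      sum_congr rfl fun i hi => ih i (mem_filter.mp hi).2, add_left_inj] at hj

theorem eq_of_apply_eq_of_forall_sum_filter_le_ne_eq (K : ι) (hK : e K = e' K)
    (h : ∀ j, ∑ i ∈ univ.filter (fun i => j ≤ i ∧ i ≠ K), e i
      = ∑ i ∈ univ.filter (fun i => j ≤ i ∧ i ≠ K), e' i) : e = e' :=
  eq_of_forall_sum_filter_le_eq fun j => by
    rw [sum_filter_le_eq_sum_filter_le_ne_add e j K, sum_filter_le_eq_sum_filter_le_ne_add e' j K,
      h, hK]

end TailSums

theorem Finsupp.sum_single_mul_apply_of_injective {α β R : Type*} [Semiring R] {g : α → β}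
    (hg : Function.Injective g) (w : α → R) (f : α →₀ R) (a : α) :
    (f.sum fun e c => Finsupp.single (g e) (w e * c)) (g a) = w a * f a := by
  classical
  simp only [Finsupp.sum_apply, Finsupp.single_apply, hg.eq_iff, Finsupp.sum_ite_eq']
  split_ifs with ha
  · rfl
  · rw [Finsupp.notMem_support_iff.mp ha, mul_zero]

theorem Pi.mem_closure_range_single_union_neg_single {ι : Type*} [Fintype ι] [DecidableEq ι]
    (l : ι) {e : ι → ℤ} (he : ∀ i ≠ l, 0 ≤ e i) :
    e ∈ AddSubmonoid.closure (Set.range (Pi.single · (1 : ℤ)) ∪ {-Pi.single l 1}) := by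
  rw [← univ_sum_single e]
  refine sum_mem fun i _ => ?_
  obtain ⟨m, hm | hm⟩ := Int.eq_nat_or_neg (e i)
  · rw [hm, ← nsmul_one m, Pi.single_smul']
    exact AddSubmonoid.nsmul_mem _
      (AddSubmonoid.mem_closure_of_mem (M := ι → ℤ) (Or.inl ⟨i, rfl⟩)) m
  · obtain rfl | hi := eq_or_ne i l
    · rw [hm, ← nsmul_one m, ← smul_neg, Pi.single_smul', Pi.single_neg]
      exact AddSubmonoid.nsmul_mem _
        (AddSubmonoid.mem_closure_of_mem (M := ι → ℤ) (Or.inr rfl)) m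
    · rw [show e i = 0 by linarith [he i hi, m.cast_nonneg (α := ℤ)], Pi.single_zero]
      exact zero_mem _

namespace AddMonoidAlgebra

variable {R M : Type*} [CommSemiring R] [AddMonoid M]

theorem of'_mem_adjoin_of'_image_of_mem_closure {S : Set M} {m : M}
    (hm : m ∈ AddSubmonoid.closure S) : of' R M m ∈ Algebra.adjoin R (of' R M '' S) := by
  induction hm using AddSubmonoid.closure_induction with
  | mem m hm => exact Algebra.subset_adjoin ⟨m, hm, rfl⟩
  | zero => exact one_mem _
  | add _ _ _ _ ih ih' =>
    rw [of'_apply, ← one_mul (1 : R), ← single_mul_single]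
    exact mul_mem ih ih'

theorem mem_adjoin_of'_image_of_support_subset_closure {S : Set M} {f : R[M]}
    (hf : ↑f.coeff.support ⊆ (AddSubmonoid.closure S : Set M)) :
    f ∈ Algebra.adjoin R (of' R M '' S) :=
  Algebra.adjoin_le (Set.image_subset_iff.mpr fun _ hm =>
    of'_mem_adjoin_of'_image_of_mem_closure (hf hm)) (mem_adjoin_support f)

end AddMonoidAlgebra

/-- The combinatorial core of the 'optimal upper bound'.  Let
`R = F[x₁^{±1},…,x_n^{±1}]` (monoid algebra of `ℤⁿ`).  For each `k < n` (zero-based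
`K` with `K < n−1`) let `r_K : R → F[d₁^{±1},…,d_n^{±1}, a^{±1}]` be the map sending
the monomial `x^e` to `(−1)^{Σ_{i>K} e_i} d^{E_K(e)} a^{e_K}`, corresponding to
`x_i ↦ d₁⋯d_i` for `i < K`, `x_K ↦ d₁⋯d_{K-1}·a`, `x_i ↦ −d₁⋯d_i` for `i > K`.
If for every such `K` the image `r_K λ` has no negative powers of `a`, then
`λ ∈ F[x₁,…,x_{n-1},x_n^{±1}]`. -/
theorem optimal_upper_bound_combinatorics (F : Type*) [Field F] (n : ℕ)
    (hn : 0 < n)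
    (E : Fin n → (Fin n → ℤ) → (Fin n → ℤ))
    (hE : ∀ (K : Fin n) (e : Fin n → ℤ), E K e = fun j =>
      (∑ i ∈ Finset.univ.filter (fun i : Fin n => j ≤ i ∧ i ≠ K), e i)
        + (if (j : ℕ) < (K : ℕ) then e K else 0))
    (rk : Fin n → AddMonoidAlgebra F (Fin n → ℤ)
            → AddMonoidAlgebra F ((Fin n → ℤ) × ℤ))
    (hrk : ∀ (K : Fin n) (μ : AddMonoidAlgebra F (Fin n → ℤ)),
      rk K μ = μ.coeff.sum (fun e c =>
        AddMonoidAlgebra.single (E K e, e K)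
          (((-1 : F) ^ (∑ i ∈ Finset.univ.filter (fun i : Fin n => K < i), e i)) * c)))
    (lam : AddMonoidAlgebra F (Fin n → ℤ))
    (hlam : ∀ K : Fin n, (K : ℕ) < n - 1 →
      ∀ p : (Fin n → ℤ) × ℤ, p.2 < 0 → (rk K lam).coeff p = 0) :
    lam ∈ Algebra.adjoin F
      (((Set.range fun i : Fin n =>
          (AddMonoidAlgebra.single (Pi.single i 1 : Fin n → ℤ) (1 : F) :
            AddMonoidAlgebra F (Fin n → ℤ))) ∪
        {AddMonoidAlgebra.single (-(Pi.single (⟨n - 1, by omega⟩ : Fin n) 1) : Fin n → ℤ) (1 : F)} :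
          Set (AddMonoidAlgebra F (Fin n → ℤ)))) := by
  classical
  set last : Fin n := ⟨n - 1, by omega⟩
  have hinj : ∀ K, Function.Injective fun e => (E K e, e K) := by
    intro K e e' he
    obtain ⟨hEe, hK⟩ := Prod.mk.inj he
    refine eq_of_apply_eq_of_forall_sum_filter_le_ne_eq K hK fun j => ?_
    have hj := congrFun hEe j
    simp only [hE] at hj
    rw [hK] at hj
    exact add_right_cancel hj
  have hcoeff : ∀ K e, (rk K lam).coeff (E K e, e K)
      = (-1) ^ (∑ i ∈ Finset.univ.filter (fun i : Fin n => K < i), e i) * lam.coeff e := by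
    intro K e
    rw [hrk, AddMonoidAlgebra.coeff_finsuppSum]
    exact Finsupp.sum_single_mul_apply_of_injective (hinj K) _ _ e
  have hnonneg : ∀ e ∈ lam.coeff.support, ∀ i ≠ last, 0 ≤ e i := by
    intro e he i hi
    by_contra! hneg
    have hzero := hcoeff i e
    rw [hlam i ((Nat.le_sub_one_of_lt i.isLt).lt_of_ne (Fin.val_ne_of_ne hi)) _ hneg] at hzero
    exact Finsupp.mem_support_iff.mp he
      ((mul_eq_zero.mp hzero.symm).resolve_left (zpow_ne_zero _ (by norm_num)))
  convert AddMonoidAlgebra.mem_adjoin_of'_image_of_support_subset_closure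
    fun e he => Pi.mem_closure_range_single_union_neg_single last (hnonneg e he)
  rw [Set.image_union, ← Set.range_comp, Set.image_singleton]
  rfl
end

section
/- Let x = s_1 s_2 ⋯ s_k be a reduced expression in the affine Weyl group W_a of SL_n such that the alcove x·A_0 is antidominant (equivalently, the alcove walk corresponding to s_1⋯s_k is in the downwards direction at every step). Write x = t_η x_0 with η the translation part. Then for every i ∈ {1,...,k}, the coweight s_1 s_2 ⋯ s_i(ᾱ_{s_i}^∨) − η lies in the nonnegative real span of positive coroots. -/
/-!
Along an alcove walk that crosses every wall downwards, each step `P j y ↦ P (j + 1) y` (for `y`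
in the open base alcove) subtracts a nonnegative multiple of a positive coroot, so
`P i₁ y - P i₂ y` lies in the closed cone spanned by the positive coroots whenever `i₁ ≤ i₂`;
since the `P j` are affine, hence continuous, this persists for `y` in the closed alcove.
As `P (i + 1)` is affine and `P (i + 1) ∘ σ (w i) = P i` with `σ (w i)` an involution,
`ᾱ = σ (w i) v - v` gives `P (i + 1) ᾱ - η = (P i v - P (i + 1) v) + (P (i + 1) 0 - P k 0)`, where
`v` and `0` lie in the closed alcove: a sum of two elements of the cone.
The cone is handled through its dual (vectors pairing nonnegatively with every antitone weight);
prefix sums turn such a vector back into a nonnegative combination of simple coroots.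
-/

open Finset

section AffineMaps

variable {R V W : Type*} [Ring R] [AddCommGroup V] [Module R V] [AddCommGroup W] [Module R W]

theorem AffineMap.map_sub_eq (g : V →ᵃ[R] W) (x y : V) : g (x - y) = g x - g y + g 0 := by
  rw [g.decomp]
  simp only [Pi.add_apply, map_sub, map_zero, zero_add]
  abel

theorem AffineMap.map_involutive_sub_eq {g : V →ᵃ[R] W} {f : V → W} {τ : V → V}
    (hτ : Function.Involutive τ) (hg : ⇑g = f ∘ τ) (v : V) : g (τ v - v) = f v - g v + g 0 := by
  rw [g.map_sub_eq, congrFun hg, Function.comp_apply, hτ]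

theorem exists_affineMap_of_succ_eq_comp {k : ℕ} (P : ℕ → V → V) (τ : Fin k → V → V)
    (hP0 : P 0 = id) (hPsucc : ∀ i : Fin k, P (i + 1) = P i ∘ τ i)
    (hτ : ∀ i, ∃ g : V →ᵃ[R] V, ⇑g = τ i) : ∀ m ≤ k, ∃ g : V →ᵃ[R] V, ⇑g = P m
  | 0, _ => ⟨AffineMap.id R V, hP0.symm⟩
  | m + 1, hm => by
    obtain ⟨g, hg⟩ := exists_affineMap_of_succ_eq_comp P τ hP0 hPsucc hτ m (by omega)
    obtain ⟨g', hg'⟩ := hτ ⟨m, hm⟩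
    exact ⟨g.comp g', by rw [hPsucc ⟨m, hm⟩, AffineMap.coe_comp, hg, hg']⟩

end AffineMaps

section Alcoves

variable {n : ℕ}

def openAlcove (n : ℕ) : Set (Fin n → ℝ) :=
  {y | ∀ a b, a < b → 0 < y a - y b ∧ y a - y b < 1}

def closedAlcove (n : ℕ) : Set (Fin n → ℝ) :=
  {y | ∀ a b, a < b → 0 ≤ y a - y b ∧ y a - y b ≤ 1}

theorem exists_mem_openAlcove : ∃ y, y ∈ openAlcove n := by
  refine ⟨fun a => -(a : ℝ) / n, fun a b hab => ?_⟩
  have hn : (0 : ℝ) < n := by exact_mod_cast a.pos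
  have hab' : (a : ℝ) < b := by exact_mod_cast hab
  have hbn : (b : ℝ) < n := by exact_mod_cast b.isLt
  have ha : (0 : ℝ) ≤ a := a.val.cast_nonneg
  rw [← sub_div, div_pos_iff_of_pos_right hn, div_lt_one hn]
  constructor <;> linarith

theorem openSegment_subset_openAlcove {p y : Fin n → ℝ} (hp : p ∈ closedAlcove n)
    (hy : y ∈ openAlcove n) : openSegment ℝ p y ⊆ openAlcove n := by
  rintro _ ⟨s, t, hs, ht, hst, rfl⟩ a b hab
  obtain ⟨hp0, hp1⟩ := hp a b hab
  obtain ⟨hy0, hy1⟩ := hy a b hab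
  simp only [Pi.add_apply, Pi.smul_apply, smul_eq_mul]
  constructor <;> nlinarith

theorem closedAlcove_subset_closure_openAlcove : closedAlcove n ⊆ closure (openAlcove n) := by
  intro p hp
  obtain ⟨y, hy⟩ := exists_mem_openAlcove (n := n)
  exact closure_mono (openSegment_subset_openAlcove hp hy)
    (segment_subset_closure_openSegment (left_mem_segment ℝ p y))

theorem zero_mem_closedAlcove : (0 : Fin n → ℝ) ∈ closedAlcove n := fun _ _ _ => by simp

theorem indicator_le_mem_closedAlcove (j : ℕ) :
    (fun i : Fin n => if (i : ℕ) ≤ j then (1 : ℝ) else 0) ∈ closedAlcove n := by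
  intro a b hab
  have : (a : ℕ) < b := hab
  dsimp only
  split_ifs <;> norm_num
  omega

def rootReflection (a b : Fin n) (m : ℝ) (x : Fin n → ℝ) : Fin n → ℝ :=
  fun j => x j - (x a - x b - m) * ((if j = a then 1 else 0) - (if j = b then 1 else 0))

theorem rootReflection_involutive {a b : Fin n} (hab : a ≠ b) (m : ℝ) :
    Function.Involutive (rootReflection a b m) := by
  intro x
  funext j
  simp only [rootReflection, if_neg hab, if_neg hab.symm, ↓reduceIte]
  ring

theorem exists_affineMap_coe_eq_rootReflection (a b : Fin n) (m : ℝ) :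
    ∃ g : (Fin n → ℝ) →ᵃ[ℝ] (Fin n → ℝ), ⇑g = rootReflection a b m := by
  let α : (Fin n → ℝ) →ₗ[ℝ] ℝ := .proj a - .proj b
  let d : Fin n → ℝ := fun j => (if j = a then 1 else 0) - (if j = b then 1 else 0)
  refine ⟨(LinearMap.id - α.smulRight d).toAffineMap + AffineMap.const ℝ _ (m • d), ?_⟩
  funext x j
  simp [rootReflection, α, d]
  ring

/-- The nonnegative span of the positive coroots `e a - e b` (`a < b`), described dually. -/
def corootCone (n : ℕ) : Set (Fin n → ℝ) :=
  {v | ∀ wt : Fin n → ℝ, Antitone wt → 0 ≤ ∑ j, wt j * v j}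

theorem add_mem_corootCone {u v : Fin n → ℝ} (hu : u ∈ corootCone n) (hv : v ∈ corootCone n) :
    u + v ∈ corootCone n := fun wt hwt => by
  simpa only [Pi.add_apply, mul_add, sum_add_distrib] using add_nonneg (hu wt hwt) (hv wt hwt)

theorem isClosed_corootCone : IsClosed (corootCone n) := by
  simp only [corootCone, Set.ofPred_forall]
  exact isClosed_iInter fun wt => isClosed_iInter fun _ =>
    isClosed_le continuous_const (by fun_prop)

theorem sub_rootReflection_mem_corootCone {a b : Fin n} {m : ℝ} {x : Fin n → ℝ} (hab : a < b)
    (hm : m < x a - x b) : x - rootReflection a b m x ∈ corootCone n := by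
  intro wt hwt
  have h : ∑ j, wt j * (x - rootReflection a b m x) j = (x a - x b - m) * (wt a - wt b) := by
    simp [rootReflection, mul_sub]
    ring
  rw [h]
  exact mul_nonneg (by linarith) (sub_nonneg.2 (hwt hab.le))

theorem sub_mem_corootCone_of_le {k : ℕ} (u : ℕ → Fin n → ℝ)
    (hu : ∀ j < k, u j - u (j + 1) ∈ corootCone n) {i₁ i₂ : ℕ} (h₁₂ : i₁ ≤ i₂) (h₂ : i₂ ≤ k) :
    u i₁ - u i₂ ∈ corootCone n := by
  induction i₂, h₁₂ using Nat.le_induction with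
  | base => intro wt _; simp
  | succ j _ ih =>
    rw [← sub_add_sub_cancel _ (u j)]
    exact add_mem_corootCone (ih (by omega)) (hu j h₂)

theorem mem_corootCone_of_mem_closedAlcove {f : (Fin n → ℝ) → Fin n → ℝ} (hf : Continuous f)
    (h : ∀ y ∈ openAlcove n, f y ∈ corootCone n) {p : Fin n → ℝ} (hp : p ∈ closedAlcove n) :
    f p ∈ corootCone n :=
  closure_minimal h (isClosed_corootCone.preimage hf) (closedAlcove_subset_closure_openAlcove hp)

theorem sub_mem_corootCone_of_downward_walk {k : ℕ} (P : ℕ → (Fin n → ℝ) → Fin n → ℝ)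
    (haff : ∀ m ≤ k, ∃ g : (Fin n → ℝ) →ᵃ[ℝ] (Fin n → ℝ), ⇑g = P m)
    (hdown : ∀ y ∈ openAlcove n, ∀ j < k, ∃ a b, a < b ∧ ∃ m : ℝ,
      m < P j y a - P j y b ∧ P (j + 1) y = rootReflection a b m (P j y))
    {i₁ i₂ : ℕ} (h₁₂ : i₁ ≤ i₂) (h₂ : i₂ ≤ k) {p : Fin n → ℝ} (hp : p ∈ closedAlcove n) :
    P i₁ p - P i₂ p ∈ corootCone n := by
  have hcont : ∀ m ≤ k, Continuous (P m) := fun m hm => by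
    obtain ⟨g, hg⟩ := haff m hm
    exact hg ▸ g.continuous_of_finiteDimensional
  refine mem_corootCone_of_mem_closedAlcove (f := fun y => P i₁ y - P i₂ y)
    ((hcont _ (h₁₂.trans h₂)).sub (hcont _ h₂))
    (fun y hy => sub_mem_corootCone_of_le (fun j => P j y) (fun j hj => ?_) h₁₂ h₂) hp
  obtain ⟨a, b, hab, m, hm, hstep⟩ := hdown y hy j hj
  rw [hstep]
  exact sub_rootReflection_mem_corootCone hab hm

theorem sum_simpleCoroots_eq (S : ℕ → ℝ) (hS0 : S 0 = 0) (hSn : S n = 0) (jj : Fin n) :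
    ∑ a : Fin n, ∑ b : Fin n, (if a < b then (if (a : ℕ) + 1 = b then S b else 0) else 0) *
      ((if jj = a then 1 else 0) - (if jj = b then 1 else 0)) = S (jj + 1) - S jj := by
  have hlt : ∀ a b : Fin n, (if a < b then (if (a : ℕ) + 1 = b then S b else 0) else 0) =
      if (a : ℕ) + 1 = b then S b else 0 := fun a b => by
    have : (a : ℕ) + 1 = b → a < b := fun h => Fin.lt_def.2 (by omega)
    split_ifs <;> simp_all
  simp only [hlt, mul_sub, mul_ite, mul_one, mul_zero, sum_sub_distrib, sum_ite_eq,
    sum_ite_irrel, mem_univ, if_true, sum_const_zero]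
  rw [Fin.sum_univ_eq_sum_range (fun b => if (jj : ℕ) + 1 = b then S b else 0),
    Fin.sum_univ_eq_sum_range (fun a => if a + 1 = (jj : ℕ) then S jj else 0), sum_ite_eq]
  congr 1
  · split_ifs with h
    · rfl
    · rw [show (jj : ℕ) + 1 = n by simp at h; omega, hSn]
  · cases h : (jj : ℕ) with
    | zero => simp [hS0]
    | succ m => simp [show m < n by omega]

theorem exists_nonneg_coroot_combination_of_mem_corootCone {v : Fin n → ℝ}
    (hv : v ∈ corootCone n) : ∃ c : Fin n → Fin n → ℝ, (∀ a b, 0 ≤ c a b) ∧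
      ∀ jj, v jj = ∑ a, ∑ b, (if a < b then c a b else 0) *
        ((if jj = a then 1 else 0) - (if jj = b then 1 else 0)) := by
  -- `S m` is the coefficient of the simple coroot `e (m - 1) - e m`.
  set S : ℕ → ℝ := fun m => ∑ j : Fin n, if (j : ℕ) < m then v j else 0 with hS
  have hS_nonneg : ∀ m, 0 ≤ S m := fun m => by
    simpa [ite_mul] using hv (fun j => if (j : ℕ) < m then 1 else 0) fun a b hab => by
      have : (a : ℕ) ≤ b := hab
      dsimp only
      split_ifs <;> norm_num
      omega
  have hsum : ∑ j, v j = 0 := le_antisymm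
    (by simpa using hv (fun _ => -1) antitone_const) (by simpa using hv (fun _ => 1) antitone_const)
  have hSsucc : ∀ jj : Fin n, S (jj + 1) - S jj = v jj := fun jj => by
    simp only [hS, ← sum_sub_distrib]
    rw [Fintype.sum_eq_single jj fun j hj => ?_]
    · simp
    · have : (j : ℕ) ≠ jj := Fin.val_ne_of_ne hj
      split_ifs <;> first | (exfalso; omega) | ring
  refine ⟨fun a b => if (a : ℕ) + 1 = b then S b else 0, fun a b => ?_, fun jj => ?_⟩
  · dsimp only
    split_ifs <;> simp [hS_nonneg]
  · rw [sum_simpleCoroots_eq S (by simp [hS]) (by simpa [hS] using hsum), hSsucc]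

end Alcoves

/-- Theorem A.16 / equation (A.1) of the paper.  Realize the affine Weyl group of
`SL_n` acting on `V = ℝⁿ` (root functionals `x ↦ x_a − x_b`).  The simple reflections
are the spherical reflections `σ (some j)` swapping coordinates `j, j+1` and the
affine reflection `σ none` across `x₁ − x_n = 1`; `vtx s` is the vertex of the
dominant base alcove `A₀ = {0 < x_a − x_b < 1, a < b}` opposite the wall of `s`, and
`ᾱ_s^∨ = σ s (vtx s) − vtx s`.  Let `x = s₁ ⋯ s_k` be an expression whose alcove walk
is downwards at every step (equivalently, a reduced expression with `x·A₀`
antidominant), with partial products `P i = σ(s₁) ∘ ⋯ ∘ σ(s_i)` and translation part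
`η = x(0)`.  Then for every `i`, the coweight `s₁ ⋯ s_i(ᾱ_{s_i}^∨) − η` lies in the
nonnegative span of the positive coroots `e_a − e_b` (`a < b`). -/
theorem downward_walk_positivity (n k : ℕ) (hn : 2 ≤ n)
    (σ : Option (Fin (n - 1)) → (Fin n → ℝ) → (Fin n → ℝ))
    (hσs : ∀ (j : Fin (n - 1)) (x : Fin n → ℝ) (i : Fin n),
      σ (some j) x i =
        if (i : ℕ) = (j : ℕ) then x ⟨(j : ℕ) + 1, by omega⟩
        else if (i : ℕ) = (j : ℕ) + 1 then x ⟨(j : ℕ), by omega⟩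
        else x i)
    (hσa : ∀ (x : Fin n → ℝ) (i : Fin n),
      σ none x i = x i -
        (x ⟨0, by omega⟩ - x ⟨n - 1, by omega⟩ - 1) *
          ((if (i : ℕ) = 0 then 1 else 0) - (if (i : ℕ) = n - 1 then 1 else 0)))
    (vtx : Option (Fin (n - 1)) → (Fin n → ℝ))
    (hvs : ∀ (j : Fin (n - 1)) (i : Fin n),
      vtx (some j) i = if (i : ℕ) ≤ (j : ℕ) then 1 else 0)
    (hva : vtx none = 0)
    (abar : Option (Fin (n - 1)) → (Fin n → ℝ))
    (habar : ∀ s, abar s = fun i => σ s (vtx s) i - vtx s i)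
    (w : Fin k → Option (Fin (n - 1)))
    (P : ℕ → (Fin n → ℝ) → (Fin n → ℝ))
    (hP0 : P 0 = id)
    (hPsucc : ∀ i : Fin k, P ((i : ℕ) + 1) = P (i : ℕ) ∘ σ (w i))
    (eta : Fin n → ℝ) (heta : eta = P k (fun _ => 0))
    (hdown : ∀ y : Fin n → ℝ,
      (∀ a b : Fin n, a < b → 0 < y a - y b ∧ y a - y b < 1) →
      ∀ i : Fin k, ∃ a b : Fin n, a < b ∧ ∃ m : ℤ,
        (m : ℝ) < P (i : ℕ) y a - P (i : ℕ) y b ∧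
        ∀ jj : Fin n, P ((i : ℕ) + 1) y jj =
          P (i : ℕ) y jj -
            (P (i : ℕ) y a - P (i : ℕ) y b - m) *
              ((if jj = a then 1 else 0) - (if jj = b then 1 else 0))) :
    ∀ i : Fin k, ∃ c : Fin n → Fin n → ℝ,
      (∀ a b : Fin n, 0 ≤ c a b) ∧
      ∀ jj : Fin n, P ((i : ℕ) + 1) (abar (w i)) jj - eta jj =
        ∑ a : Fin n, ∑ b : Fin n,
          (if a < b then c a b else 0) *
            ((if jj = a then 1 else 0) - (if jj = b then 1 else 0)) := by
  intro i
  have hσ_some : ∀ j : Fin (n - 1),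
      σ (some j) = fun x => x ∘ Equiv.swap ⟨j, by omega⟩ ⟨j + 1, by omega⟩ := fun j => by
    funext x l
    rw [hσs, Function.comp_apply, Equiv.swap_apply_def]
    simp only [Fin.ext_iff]
    split_ifs <;> rfl
  have hσ_none : σ none = rootReflection ⟨0, by omega⟩ ⟨n - 1, by omega⟩ 1 := by
    funext x l
    simp [hσa, rootReflection, Fin.ext_iff]
  have hσ_aff : ∀ s, ∃ g : (Fin n → ℝ) →ᵃ[ℝ] (Fin n → ℝ), ⇑g = σ s
    | none => hσ_none ▸ exists_affineMap_coe_eq_rootReflection _ _ _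
    | some j => ⟨(LinearMap.funLeft ℝ ℝ (Equiv.swap _ _)).toAffineMap, (hσ_some j).symm⟩
  have hσ_inv : ∀ s, Function.Involutive (σ s)
    | none => hσ_none ▸ rootReflection_involutive (by simp [Fin.ext_iff]; omega) 1
    | some j => hσ_some j ▸ fun x => by ext; simp
  have hP_aff := exists_affineMap_of_succ_eq_comp P (fun i => σ (w i)) hP0 hPsucc
    fun i => hσ_aff (w i)
  have hwalk {p} (hp : p ∈ closedAlcove n) {i₁ i₂} (h₁₂ : i₁ ≤ i₂) (h₂ : i₂ ≤ k) :=
    sub_mem_corootCone_of_downward_walk P hP_aff (fun y hy j hj => by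
      obtain ⟨a, b, hab, m, hm, hstep⟩ := hdown y hy ⟨j, hj⟩
      exact ⟨a, b, hab, m, hm, funext hstep⟩) h₁₂ h₂ hp
  have hvtx : vtx (w i) ∈ closedAlcove n := by
    rcases w i with _ | j
    · exact hva ▸ zero_mem_closedAlcove
    · exact funext (hvs j) ▸ indicator_le_mem_closedAlcove j
  have hdecomp : P (i + 1) (abar (w i)) - eta =
      (P i (vtx (w i)) - P (i + 1) (vtx (w i))) + (P (i + 1) 0 - P k 0) := by
    obtain ⟨g, hg⟩ := hP_aff (i + 1) i.2
    have h := g.map_involutive_sub_eq (hσ_inv (w i)) (hg.trans (hPsucc i)) (vtx (w i))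
    rw [hg] at h
    rw [show abar (w i) = σ (w i) (vtx (w i)) - vtx (w i) from habar _, h, heta]
    abel
  have hmem : P (i + 1) (abar (w i)) - eta ∈ corootCone n := hdecomp ▸ add_mem_corootCone
    (hwalk hvtx (Nat.le_succ _) i.2) (hwalk zero_mem_closedAlcove i.2 le_rfl)
  exact exists_nonneg_coroot_combination_of_mem_corootCone hmem
end

section
/- Let A be an n×n matrix over a commutative ring which agrees with the diagonal matrix diag(d_1,...,d_n) except that rows/columns k, k+1 form the block [[a, d_k],[d_{k+1}, 0]]. Then the upper-left i×i minor of A equals d_1⋯d_i for i < k; equals d_1⋯d_{k-1}·a for i = k; and equals −d_1⋯d_i for i > k. -/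
private lemma det_lastRow {R : Type*} [CommRing R] {m : ℕ}
    (M : Matrix (Fin (m + 1)) (Fin (m + 1)) R)
    (h : ∀ j : Fin (m + 1), (j : ℕ) ≠ m → M (Fin.last m) j = 0) :
    M.det = M (Fin.last m) (Fin.last m) *
      (M.submatrix Fin.castSucc Fin.castSucc).det := by
  rw [Matrix.det_succ_row M (Fin.last m)]
  rw [Finset.sum_eq_single (Fin.last m)]
  · rw [Fin.succAbove_last]
    simp only [Fin.val_last, pow_add, ← mul_pow]
    norm_num
  · intro j _ hj
    rw [h j (by simpa [Fin.ext_iff] using hj)]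
    ring
  · simp

/-- Minors of the matrix of the auxiliary chart `B_k`: the matrix `A` agrees with
`diag(d₀,…,d_{n-1})` except that rows/columns `k, k+1` (zero-based) form the block
`[[a, d_k],[d_{k+1}, 0]]`.  Its upper-left `i×i` minor equals `d₀⋯d_{i-1}` for
`i ≤ k`, equals `d₀⋯d_{k-1}·a` for `i = k+1`, and equals `−d₀⋯d_{i-1}` for
`i ≥ k+2`. -/
theorem auxiliary_chart_minors (R : Type*) [CommRing R] (n k : ℕ)
    (hk : k + 1 < n) (d : ℕ → R) (a : R)
    (A : Matrix (Fin n) (Fin n) R)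
    (hA : ∀ i j : Fin n, A i j =
      if (i : ℕ) = k ∧ (j : ℕ) = k then a
      else if (i : ℕ) = k ∧ (j : ℕ) = k + 1 then d k
      else if (i : ℕ) = k + 1 ∧ (j : ℕ) = k then d (k + 1)
      else if (i : ℕ) = k + 1 ∧ (j : ℕ) = k + 1 then 0
      else if i = j then d (i : ℕ)
      else 0) :
    ∀ (i : ℕ) (h : i ≤ n),
      (i ≤ k → ((A.submatrix (Fin.castLE h) (Fin.castLE h)).det =
          ∏ j ∈ Finset.range i, d j)) ∧
      (i = k + 1 → ((A.submatrix (Fin.castLE h) (Fin.castLE h)).det =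
          (∏ j ∈ Finset.range k, d j) * a)) ∧
      (k + 2 ≤ i → ((A.submatrix (Fin.castLE h) (Fin.castLE h)).det =
          - ∏ j ∈ Finset.range i, d j)) := by
  intro i
  induction i with
  | zero =>
    intro h
    refine ⟨fun _ => ?_, fun h' => by omega, fun h' => by omega⟩
    simp [Matrix.det_fin_zero]
  | succ i ih =>
    intro h
    have hn : i ≤ n := Nat.le_of_succ_le h
    have hsub : ((A.submatrix (Fin.castLE h) (Fin.castLE h)).submatrix
        Fin.castSucc Fin.castSucc) = A.submatrix (Fin.castLE hn) (Fin.castLE hn) := by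
      ext p q
      simp [Matrix.submatrix_apply]
    refine ⟨fun h1 => ?_, fun h1 => ?_, fun h1 => ?_⟩
    · -- i + 1 ≤ k : diagonal so far
      rw [det_lastRow]
      · rw [hsub, (ih hn).1 (by omega)]
        have hd : A.submatrix (Fin.castLE h) (Fin.castLE h) (Fin.last i) (Fin.last i)
            = d i := by
          rw [Matrix.submatrix_apply, hA]
          simp only [Fin.coe_castLE, Fin.val_last]
          have e1 : i ≠ k := by omega
          have e2 : i ≠ k + 1 := by omega
          simp [e1, e2]
        rw [hd, Finset.prod_range_succ, mul_comm]
      · intro j hj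
        rw [Matrix.submatrix_apply, hA]
        simp only [Fin.coe_castLE, Fin.val_last]
        have hjk : (j : ℕ) < i + 1 := j.isLt
        have h1 : i ≠ k := by omega
        have h2 : i ≠ k + 1 := by omega
        have h3 : Fin.castLE h (Fin.last i) ≠ Fin.castLE h j := by
          simp only [ne_eq, Fin.ext_iff, Fin.coe_castLE, Fin.val_last]
          omega
        simp_all
    · -- i + 1 = k + 1 : i = k
      have hik : i = k := by omega
      subst hik
      rw [det_lastRow]
      · rw [hsub, (ih hn).1 (le_refl i)]
        have hd : A.submatrix (Fin.castLE h) (Fin.castLE h) (Fin.last i) (Fin.last i)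
            = a := by
          rw [Matrix.submatrix_apply, hA]
          simp
        rw [hd, mul_comm]
      · intro j hj
        rw [Matrix.submatrix_apply, hA]
        simp only [Fin.coe_castLE, Fin.val_last]
        have hjk : (j : ℕ) < i + 1 := j.isLt
        have h3 : Fin.castLE h (Fin.last i) ≠ Fin.castLE h j := by
          simp [Fin.ext_iff, hj.symm]
        have h4 : (j : ℕ) ≠ i := hj
        have h5 : (j : ℕ) ≠ i + 1 := by omega
        simp_all
    · -- i + 1 ≥ k + 2
      rcases Nat.lt_or_ge i (k + 2) with hi | hi
      · -- base case: i = k + 1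
        have hik : i = k + 1 := by omega
        subst hik
        set M := A.submatrix (Fin.castLE h) (Fin.castLE h) with hM
        rw [Matrix.det_succ_row M (Fin.last (k + 1))]
        rw [Finset.sum_eq_single (⟨k, by omega⟩ : Fin (k + 2))]
        · have hent : M (Fin.last (k + 1)) ⟨k, by omega⟩ = d (k + 1) := by
            rw [hM, Matrix.submatrix_apply, hA]
            simp
          have hminor : M.submatrix (Fin.last (k + 1)).succAbove
              (⟨k, by omega⟩ : Fin (k + 2)).succAbove =
              Matrix.diagonal (fun p : Fin (k + 1) => d (p : ℕ)) := by
            ext p q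
            have hcol : (((⟨k, by omega⟩ : Fin (k + 2)).succAbove q : Fin (k+2)) : ℕ) =
                if (q : ℕ) < k then (q : ℕ) else (q : ℕ) + 1 := by
              unfold Fin.succAbove
              split_ifs with h1 h2 h3
              · rfl
              · exact absurd h1 (by simpa [Fin.lt_def] using h2)
              · exact absurd (by simpa [Fin.lt_def] using h3) h1
              · rfl
            have hp : (p : ℕ) < k + 1 := p.isLt
            have hq : (q : ℕ) < k + 1 := q.isLt
            rw [Fin.succAbove_last, Matrix.submatrix_apply, hM, Matrix.submatrix_apply,
              hA, Matrix.diagonal_apply]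
            simp only [Fin.coe_castLE, Fin.coe_castSucc, Fin.ext_iff, hcol]
            split_ifs <;> first | rfl | (congr 1; omega) | (exfalso; omega)
          rw [hent, hminor, Matrix.det_diagonal]
          have hprod : (∏ p : Fin (k + 1), d (p : ℕ)) = ∏ j ∈ Finset.range (k + 1), d j := by
            rw [Finset.prod_range fun j => d j]
          rw [hprod]
          have hsign : ((-1 : R)) ^ ((Fin.last (k + 1) : ℕ) + ((⟨k, by omega⟩ : Fin (k+2)) : ℕ))
              = -1 := by
            simp only [Fin.val_last]
            have : (k + 1) + k = 2 * k + 1 := by ring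
            rw [this, pow_succ, pow_mul]
            norm_num
          rw [hsign]
          conv_rhs => rw [Finset.prod_range_succ]
          ring
        · intro j _ hj
          have : M (Fin.last (k + 1)) j = 0 := by
            rw [hM, Matrix.submatrix_apply, hA]
            simp only [Fin.coe_castLE, Fin.val_last]
            have hjv : (j : ℕ) ≠ k := fun hc => hj (Fin.ext hc)
            have hjl : (j : ℕ) < k + 2 := j.isLt
            by_cases hj1 : (j : ℕ) = k + 1
            · simp [hj1]
            · have : Fin.castLE h (Fin.last (k + 1)) ≠ Fin.castLE h j := by
                simp [Fin.ext_iff]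
                omega
              simp_all
          rw [this]
          ring
        · simp
      · -- i ≥ k + 2
        rw [det_lastRow]
        · rw [hsub, (ih hn).2.2 hi]
          have hd : A.submatrix (Fin.castLE h) (Fin.castLE h) (Fin.last i) (Fin.last i)
              = d i := by
            rw [Matrix.submatrix_apply, hA]
            simp only [Fin.coe_castLE, Fin.val_last]
            have e1 : i ≠ k := by omega
            have e2 : i ≠ k + 1 := by omega
            simp [e1, e2]
          rw [hd, Finset.prod_range_succ]
          ring
        · intro j hj
          rw [Matrix.submatrix_apply, hA]
          simp only [Fin.coe_castLE, Fin.val_last]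
          have hjk : (j : ℕ) < i + 1 := j.isLt
          have h1 : i ≠ k := by omega
          have h2 : i ≠ k + 1 := by omega
          have h3 : Fin.castLE h (Fin.last i) ≠ Fin.castLE h j := by
            simp [Fin.ext_iff, hj.symm]
          simp_all
end
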